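/- In the metapopulation model, assume additionally that: (i) for each i, d_{ii}(x) = d_i is constant in x, with d_i ∈ (0,1); (ii) each g_i is strictly decreasing on [0,∞) and each d_{ij} with i ≠ j is strictly decreasing on [0,∞); and (iii) ρ(A(0)) < 1. Then there exists a vector v ∈ ℝⁿ with every component strictly positive such that ⟨v, A(0)x⟩ < ⟨v, x⟩ for all nonzero x ∈ ℝ₊ⁿ, and ⟨v, F(x)⟩ < ⟨v, x⟩ for every x ∈ ℝⁿ with all components strictly positive; that is, V(x) = ⟨v, x⟩ is strictly decreasing along orbits of F in the open positive orthant. -/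

import Mathlib

noncomputable def specRad {n : ℕ} (A : Matrix (Fin n) (Fin n) ℝ) : ℝ :=
  sSup {r : ℝ | ∃ μ : ℂ, μ ∈ spectrum ℂ (A.map (fun a : ℝ => (a : ℂ))) ∧ r = ‖μ‖}

open Matrix
open scoped ENNReal NNReal

attribute [local instance] Matrix.linftyOpNormedRing Matrix.linftyOpNormedAlgebra

lemma spectrum_transpose_aux {n : ℕ} (M : Matrix (Fin n) (Fin n) ℂ) :
    spectrum ℂ Mᵀ = spectrum ℂ M := by
  ext μ
  rw [spectrum.mem_iff, spectrum.mem_iff, not_iff_not, Matrix.isUnit_iff_isUnit_det,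
    Matrix.isUnit_iff_isUnit_det, ← Matrix.det_transpose (algebraMap ℂ _ μ - Mᵀ),
    Matrix.transpose_sub, Matrix.transpose_transpose, Matrix.algebraMap_eq_diagonal,
    Matrix.diagonal_transpose]

lemma pow_entry_nonneg {n : ℕ} (M : Matrix (Fin n) (Fin n) ℝ) (hM : ∀ i j, 0 ≤ M i j) :
    ∀ k i j, 0 ≤ (M ^ k) i j := by
  intro k
  induction k with
  | zero => intro i j; simp [Matrix.one_apply]; positivity
  | succ k ih =>
    intro i j
    rw [pow_succ, Matrix.mul_apply]
    exact Finset.sum_nonneg fun l _ => mul_nonneg (ih i l) (hM l j)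

lemma colsum_pow_lt_one {n : ℕ} (hn : 0 < n) (M : Matrix (Fin n) (Fin n) ℝ)
    (hρ : specRad M < 1) :
    ∃ N : ℕ, 0 < N ∧ ∀ i, ∑ j, ‖(((M ^ N)ᵀ).map (fun a : ℝ => (a : ℂ))) i j‖ < 1 := by
  haveI : Nonempty (Fin n) := ⟨⟨0, hn⟩⟩
  haveI : CompleteSpace (Matrix (Fin n) (Fin n) ℂ) := FiniteDimensional.complete ℂ _
  set Mc : Matrix (Fin n) (Fin n) ℂ := (Mᵀ).map (fun a : ℝ => (a : ℂ)) with hMc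
  -- spectral radius bound
  have hb : BddAbove {r : ℝ | ∃ μ : ℂ,
      μ ∈ spectrum ℂ (M.map (fun a : ℝ => (a : ℂ))) ∧ r = ‖μ‖} := by
    have hc : IsCompact (spectrum ℂ (M.map (fun a : ℝ => (a : ℂ)))) := spectrum.isCompact _
    have himg := (hc.image continuous_norm).bddAbove
    convert himg using 1
    ext r
    simp only [Set.mem_setOf_eq, Set.mem_image]
    aesop
  have hsr : spectralRadius ℂ Mc < 1 := by
    have hle : spectralRadius ℂ Mc ≤ ENNReal.ofReal (specRad M) := by
      rw [spectralRadius]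
      refine iSup₂_le fun μ hμ => ?_
      have hμ' : μ ∈ spectrum ℂ (M.map (fun a : ℝ => (a : ℂ))) := by
        rw [hMc, Matrix.transpose_map, spectrum_transpose_aux] at hμ
        exact hμ
      have habs : ‖μ‖ ≤ specRad M := le_csSup hb ⟨μ, hμ', rfl⟩
      calc (‖μ‖₊ : ℝ≥0∞) = ENNReal.ofReal ‖μ‖ := (ofReal_norm μ).symm
        _ ≤ ENNReal.ofReal (specRad M) := ENNReal.ofReal_le_ofReal habs
    exact lt_of_le_of_lt hle (by rwa [ENNReal.ofReal_lt_one])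
  -- Gelfand formula
  have htend := spectrum.pow_nnnorm_pow_one_div_tendsto_nhds_spectralRadius Mc
  have hev : ∀ᶠ N : ℕ in Filter.atTop, (‖Mc ^ N‖₊ : ℝ≥0∞) ^ (1 / (N : ℝ)) < 1 :=
    htend.eventually_lt_const hsr
  obtain ⟨N, hNlt, hN1⟩ := (hev.and (Filter.eventually_ge_atTop 1)).exists
  have hnorm : ‖Mc ^ N‖₊ < 1 := by
    by_contra h
    push_neg at h
    have h1 : (1 : ℝ≥0∞) ≤ (‖Mc ^ N‖₊ : ℝ≥0∞) ^ (1 / (N : ℝ)) := by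
      calc (1 : ℝ≥0∞) = (1 : ℝ≥0∞) ^ (1 / (N : ℝ)) := (ENNReal.one_rpow _).symm
        _ ≤ _ := ENNReal.rpow_le_rpow (by exact_mod_cast h) (by positivity)
    exact absurd hNlt (not_lt.mpr h1)
  have hMcN : Mc ^ N = ((M ^ N)ᵀ).map (fun a : ℝ => (a : ℂ)) := by
    have : Mc = Complex.ofRealHom.mapMatrix Mᵀ := rfl
    rw [this, ← map_pow, RingHom.mapMatrix_apply, Matrix.transpose_pow]
    rfl
  refine ⟨N, hN1, fun i => ?_⟩
  have hrow : ∑ j, ‖(Mc ^ N) i j‖₊ ≤ ‖Mc ^ N‖₊ := by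
    rw [Matrix.linfty_opNNNorm_def]
    exact Finset.le_sup (f := fun i => ∑ j, ‖(Mc ^ N) i j‖₊) (Finset.mem_univ i)
  have : ∑ j, ‖(Mc ^ N) i j‖₊ < 1 := lt_of_le_of_lt hrow hnorm
  have hreal : ((∑ j, ‖(Mc ^ N) i j‖₊ : ℝ≥0) : ℝ) < 1 := by exact_mod_cast this
  rw [NNReal.coe_sum] at hreal
  simpa [hMcN] using hreal

theorem stmt_4 (n : ℕ) (hn : 0 < n)
    (g : Fin n → ℝ → ℝ)
    (hg_smooth : ∀ i, ContDiff ℝ 1 (g i))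
    (hg_pos : ∀ i, ∀ x : ℝ, 0 ≤ x → 0 < g i x)
    (m : Fin n → ℝ) (hm_nonneg : ∀ i, 0 ≤ m i)
    (hf_bdd : ∀ i, ∀ x : ℝ, 0 ≤ x → g i x * x ≤ m i)
    (d : Fin n → Fin n → ℝ → ℝ)
    (hd_smooth : ∀ i j, ContDiff ℝ 1 (d i j))
    (hd_pos : ∀ i j, ∀ x : ℝ, 0 ≤ x → 0 < d i j x)
    (hd_lt1 : ∀ i j, ∀ x : ℝ, 0 ≤ x → d i j x < 1)
    (hd_colsum : ∀ i, ∀ x : ℝ, 0 ≤ x → (∑ j, d j i x) < 1)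
    (F : (Fin n → ℝ) → (Fin n → ℝ))
    (hF : ∀ x : Fin n → ℝ, ∀ i, F x i = ∑ j, d i j (x j) * (g j (x j) * x j))
    (A0 : Matrix (Fin n) (Fin n) ℝ)
    (hA0 : ∀ i j, A0 i j = d i j 0 * g j 0)
    (hd_const : ∀ i, ∀ x : ℝ, d i i x = d i i 0)
    (hg_anti : ∀ i, StrictAntiOn (g i) (Set.Ici 0))
    (hd_anti : ∀ i j, i ≠ j → StrictAntiOn (d i j) (Set.Ici 0))
    (hρ : specRad A0 < 1) :
    ∃ v : Fin n → ℝ, (∀ i, 0 < v i) ∧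
      (∀ x : Fin n → ℝ, (∀ i, 0 ≤ x i) → x ≠ 0 →
        (∑ i, v i * A0.mulVec x i) < ∑ i, v i * x i) ∧
      (∀ x : Fin n → ℝ, (∀ i, 0 < x i) →
        (∑ i, v i * F x i) < ∑ i, v i * x i) := by
  classical
  haveI : Nonempty (Fin n) := ⟨⟨0, hn⟩⟩
  have hA0nn : ∀ i j, 0 ≤ A0 i j := fun i j => by
    rw [hA0]; exact mul_nonneg (hd_pos i j 0 le_rfl).le (hg_pos j 0 le_rfl).le
  have hpow := pow_entry_nonneg A0 hA0nn
  obtain ⟨N, hN1, hNcol⟩ := colsum_pow_lt_one hn A0 hρ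
  -- column sums of A0^N are < 1
  have hcol : ∀ i, ∑ j, (A0 ^ N) j i < 1 := by
    intro i
    have := hNcol i
    calc ∑ j, (A0 ^ N) j i
        = ∑ j, ‖(((A0 ^ N)ᵀ).map (fun a : ℝ => (a : ℂ))) i j‖ := by
          refine Finset.sum_congr rfl fun j _ => ?_
          rw [Matrix.map_apply, Matrix.transpose_apply, Complex.norm_real,
            Real.norm_eq_abs, abs_of_nonneg (hpow N j i)]
      _ < 1 := this
  set c : ℕ → Fin n → ℝ := fun k i => ∑ l, (A0 ^ k) l i with hc
  have hc0 : ∀ i, c 0 i = 1 := by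
    intro i; simp [hc, Matrix.one_apply]
  have hcnn : ∀ k i, 0 ≤ c k i := fun k i =>
    Finset.sum_nonneg fun l _ => hpow k l i
  set v : Fin n → ℝ := fun i => ∑ k ∈ Finset.range N, c k i with hv
  have hv1 : ∀ i, 1 ≤ v i := by
    intro i
    calc (1 : ℝ) = c 0 i := (hc0 i).symm
      _ ≤ v i := Finset.single_le_sum (f := fun k => c k i)
          (fun k _ => hcnn k i) (Finset.mem_range.mpr hN1)
  have hvpos : ∀ i, 0 < v i := fun i => lt_of_lt_of_le one_pos (hv1 i)
  -- key recursion: ∑ i, c k i * A0 i j = c (k+1) j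
  have hrec : ∀ k j, (∑ i, c k i * A0 i j) = c (k + 1) j := by
    intro k j
    simp only [hc, Finset.sum_mul]
    rw [Finset.sum_comm]
    refine Finset.sum_congr rfl fun l _ => ?_
    rw [pow_succ, Matrix.mul_apply]
  -- left action of A0 on v
  have hu : ∀ j, (∑ i, v i * A0 i j) = v j + c N j - 1 := by
    intro j
    have : (∑ i, v i * A0 i j) = ∑ k ∈ Finset.range N, c (k + 1) j := by
      simp only [hv, Finset.sum_mul]
      rw [Finset.sum_comm]
      exact Finset.sum_congr rfl fun k _ => hrec k j
    rw [this]
    have h1 : ∑ k ∈ Finset.range (N + 1), c k j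
        = ∑ k ∈ Finset.range N, c (k + 1) j + c 0 j := Finset.sum_range_succ' _ _
    have h2 : ∑ k ∈ Finset.range (N + 1), c k j
        = ∑ k ∈ Finset.range N, c k j + c N j := Finset.sum_range_succ _ _
    rw [hc0] at h1
    have : ∑ k ∈ Finset.range N, c (k + 1) j = v j + c N j - 1 := by
      rw [hv]; linarith [h1, h2]
    exact this
  have hu_lt : ∀ j, (∑ i, v i * A0 i j) < v j := by
    intro j; rw [hu j]; linarith [hcol j]
  -- part 2
  have part2 : ∀ x : Fin n → ℝ, (∀ i, 0 ≤ x i) → x ≠ 0 →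
      (∑ i, v i * A0.mulVec x i) < ∑ i, v i * x i := by
    intro x hx hx0
    obtain ⟨i0, hi0⟩ : ∃ i0, 0 < x i0 := by
      by_contra h
      push_neg at h
      exact hx0 (funext fun i => le_antisymm (h i) (hx i))
    have hLHS : (∑ i, v i * A0.mulVec x i) = ∑ j, (∑ i, v i * A0 i j) * x j := by
      simp only [Matrix.mulVec, dotProduct, Finset.mul_sum, Finset.sum_mul]
      rw [Finset.sum_comm]
      exact Finset.sum_congr rfl fun j _ => Finset.sum_congr rfl fun i _ => by ring
    rw [hLHS]
    refine Finset.sum_lt_sum (fun j _ => ?_) ⟨i0, Finset.mem_univ i0, ?_⟩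
    · exact mul_le_mul_of_nonneg_right (hu_lt j).le (hx j)
    · exact mul_lt_mul_of_pos_right (hu_lt i0) hi0
  refine ⟨v, hvpos, part2, ?_⟩
  -- part 3
  intro x hx
  have hxnn : ∀ i, 0 ≤ x i := fun i => (hx i).le
  have hFx : ∀ i, F x i < A0.mulVec x i := by
    intro i
    rw [hF]
    simp only [Matrix.mulVec, dotProduct]
    refine Finset.sum_lt_sum_of_nonempty Finset.univ_nonempty fun j _ => ?_
    have hxj := hx j
    have hmem0 : (0 : ℝ) ∈ Set.Ici (0 : ℝ) := Set.self_mem_Ici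
    have hmemx : x j ∈ Set.Ici (0 : ℝ) := hxnn j
    have h1 : d i j (x j) ≤ d i j 0 := by
      rcases eq_or_ne i j with rfl | hne
      · rw [hd_const i (x i)]
      · exact (hd_anti i j hne hmem0 hmemx hxj).le
    have h2 : g j (x j) < g j 0 := hg_anti j hmem0 hmemx hxj
    have hgx : 0 < g j (x j) * x j := mul_pos (hg_pos j (x j) (hxnn j)) hxj
    calc d i j (x j) * (g j (x j) * x j)
        ≤ d i j 0 * (g j (x j) * x j) := mul_le_mul_of_nonneg_right h1 hgx.le
      _ < d i j 0 * (g j 0 * x j) :=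
          mul_lt_mul_of_pos_left (mul_lt_mul_of_pos_right h2 hxj) (hd_pos i j 0 le_rfl)
      _ = A0 i j * x j := by rw [hA0]; ring
  have step1 : (∑ i, v i * F x i) < ∑ i, v i * A0.mulVec x i :=
    Finset.sum_lt_sum_of_nonempty Finset.univ_nonempty fun i _ =>
      mul_lt_mul_of_pos_left (hFx i) (hvpos i)
  have hxne : x ≠ 0 := by
    intro h
    have := congrFun h ⟨0, hn⟩
    exact absurd this (ne_of_gt (hx ⟨0, hn⟩))
  exact lt_trans step1 (part2 x hxnn hxne)
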